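/- arXiv:2408.04498 — 2 statements merged into one kernel-verified Lean document; each statement's English description precedes it below -/
import Mathlib

section
/- Let L > 0 and let (M_k)_{k≥1} be a sequence of finite multisets of positive real numbers such that M_1 = {L} and, for each k ≥ 1, M_{k+1} is obtained from M_k by removing one element m that is maximal in M_k and inserting the two elements m/2 and m/2. Then for every k ≥ 1, every element of M_k is at most 2^(−⌊log₂ k⌋)·L, where ⌊log₂ k⌋ denotes the greatest integer j with 2^j ≤ k. -/
/-- Geometric shrinkage of the largest segment under greedy halving: starting
from the single segment `{L}` and repeatedly replacing a maximal element `m`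
by two copies of `m/2`, every element of the `k`-th multiset is at most
`2^(−⌊log₂ k⌋) · L`, where `⌊log₂ k⌋ = Nat.log 2 k` is the greatest `j` with
`2^j ≤ k`. -/
theorem stmt_10 (L : ℝ) (hL : 0 < L) (M : ℕ → Multiset ℝ)
    (hpos : ∀ k : ℕ, 1 ≤ k → ∀ x ∈ M k, (0 : ℝ) < x)
    (hM1 : M 1 = {L})
    (hstep : ∀ k : ℕ, 1 ≤ k → ∃ m ∈ M k, (∀ x ∈ M k, x ≤ m) ∧
      M (k + 1) = m / 2 ::ₘ m / 2 ::ₘ (M k).erase m) :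
    ∀ k : ℕ, 1 ≤ k → ∀ x ∈ M k, x ≤ ((2 : ℝ) ^ Nat.log 2 k)⁻¹ * L := by
  classical
  -- one step preserves an upper bound
  have hmono : ∀ k : ℕ, 1 ≤ k → ∀ b : ℝ, (∀ x ∈ M k, x ≤ b) →
      ∀ x ∈ M (k + 1), x ≤ b := by
    intro k hk b hb x hx
    obtain ⟨m, hm, hmax, heq⟩ := hstep k hk
    rw [heq] at hx
    have hmpos := hpos k hk m hm
    have hmb := hb m hm
    rcases Multiset.mem_cons.mp hx with h | hx
    · rw [h]; linarith
    rcases Multiset.mem_cons.mp hx with h | hx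
    · rw [h]; linarith
    · exact hb x (Multiset.mem_of_mem_erase hx)
  have hmono' : ∀ k : ℕ, 1 ≤ k → ∀ n : ℕ, ∀ b : ℝ, (∀ x ∈ M k, x ≤ b) →
      ∀ x ∈ M (k + n), x ≤ b := by
    intro k hk n
    induction n with
    | zero => intro b hb; exact hb
    | succ n ih =>
      intro b hb
      have := hmono (k + n) (by omega) b (ih b hb)
      simpa [Nat.add_assoc] using this
  -- cardinality
  have hcard : ∀ k : ℕ, 1 ≤ k → (M k).card = k := by
    intro k hk
    induction k with
    | zero => omega
    | succ n ih =>
      rcases Nat.lt_or_ge 1 (n + 1) with h | h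
      · have hn : 1 ≤ n := by omega
        obtain ⟨m, hm, hmax, heq⟩ := hstep n hn
        rw [heq]
        have hc : (M n).card = n := ih hn
        simp [Multiset.card_erase_of_mem hm, hc]
        omega
      · have : n = 0 := by omega
        subst this
        simp [hM1]
  -- key halving lemma
  have hhalf : ∀ n : ℕ, ∀ k : ℕ, 1 ≤ k → ∀ b : ℝ, 0 < b →
      (∀ x ∈ M k, x ≤ b) →
      ((M k).filter (fun x => b / 2 < x)).card ≤ n →
      ∀ x ∈ M (k + n), x ≤ b / 2 := by
    intro n
    induction n with
    | zero =>
      intro k hk b hb hble hcount x hx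
      simp only [Nat.add_zero] at hx
      by_contra hcon
      push_neg at hcon
      have hmem : x ∈ (M k).filter (fun x => b / 2 < x) :=
        Multiset.mem_filter.mpr ⟨hx, hcon⟩
      have : ((M k).filter (fun x => b / 2 < x)).card = 0 := by omega
      rw [Multiset.card_eq_zero] at this
      rw [this] at hmem
      exact absurd hmem (Multiset.notMem_zero x)
    | succ n ih =>
      intro k hk b hb hble hcount
      by_cases hall : ∀ x ∈ M k, x ≤ b / 2
      · intro x hx
        exact hmono' k hk (n + 1) (b / 2) hall x hx
      · obtain ⟨m, hm, hmax, heq⟩ := hstep k hk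
        push_neg at hall
        obtain ⟨y, hy, hy2⟩ := hall
        have hm2 : b / 2 < m := lt_of_lt_of_le hy2 (hmax y hy)
        have hmb := hble m hm
        have hm2' : ¬ (b / 2 < m / 2) := by push_neg; linarith
        have hsplit : (M k).filter (fun x => b / 2 < x)
            = m ::ₘ ((M k).erase m).filter (fun x => b / 2 < x) := by
          conv_lhs => rw [← Multiset.cons_erase hm]
          rw [Multiset.filter_cons_of_pos _ hm2]
        have hkey : ((M (k + 1)).filter (fun x => b / 2 < x)).card ≤ n := by
          rw [heq, Multiset.filter_cons_of_neg _ hm2',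
            Multiset.filter_cons_of_neg _ hm2']
          rw [hsplit] at hcount
          simp only [Multiset.card_cons, Nat.add_le_add_iff_right] at hcount
          exact hcount
        have hres := ih (k + 1) (by omega) b hb (hmono k hk b hble) hkey
        intro x hx
        have hnn : k + (n + 1) = (k + 1) + n := by omega
        rw [hnn] at hx
        exact hres x hx
  -- bound at powers of two
  have hpow : ∀ j : ℕ, ∀ x ∈ M (2 ^ j), x ≤ ((2 : ℝ) ^ j)⁻¹ * L := by
    intro j
    induction j with
    | zero => intro x hx; simp [hM1] at hx ⊢; simp [hx]
    | succ j ih =>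
      have h1 : 1 ≤ 2 ^ j := Nat.one_le_two_pow
      have hb : (0 : ℝ) < ((2 : ℝ) ^ j)⁻¹ * L := by positivity
      have hcnt : ((M (2 ^ j)).filter
          (fun x => ((2 : ℝ) ^ j)⁻¹ * L / 2 < x)).card ≤ 2 ^ j := by
        calc ((M (2 ^ j)).filter (fun x => ((2 : ℝ) ^ j)⁻¹ * L / 2 < x)).card
            ≤ (M (2 ^ j)).card := Multiset.card_le_card (Multiset.filter_le _ _)
          _ = 2 ^ j := hcard _ h1
      have hres := hhalf (2 ^ j) (2 ^ j) h1 _ hb ih hcnt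
      intro x hx
      have h2 : 2 ^ (j + 1) = 2 ^ j + 2 ^ j := by
        rw [pow_succ]; omega
      rw [h2] at hx
      have := hres x hx
      have heqb : ((2 : ℝ) ^ j)⁻¹ * L / 2 = ((2 : ℝ) ^ (j + 1))⁻¹ * L := by
        rw [pow_succ]
        field_simp
      rwa [heqb] at this
  -- conclude
  intro k hk x hx
  set j := Nat.log 2 k with hj
  have h2j : 2 ^ j ≤ k := Nat.pow_log_le_self 2 (by omega)
  have h1 : (1 : ℕ) ≤ 2 ^ j := Nat.one_le_two_pow
  have hres := hmono' (2 ^ j) h1 (k - 2 ^ j) (((2 : ℝ) ^ j)⁻¹ * L) (hpow j)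
  have hk' : 2 ^ j + (k - 2 ^ j) = k := by omega
  rw [hk'] at hres
  exact hres x hx
end

section
/- Let L > 0, let K ≥ 1 be a natural number, and for k = 1,…,K set x_k = (2k−1)·L/(2K). Then ∫_0^L ( min_{1 ≤ k ≤ K} |t − x_k| ) dt = L²/(4K). -/
/-- Average-case guarantee of the Equidistant Strategy (MBTL-ES): with source
tasks `x_k = (2k−1)L/(2K)`, the integral over `[0, L]` of the distance to the
nearest source task equals `L²/(4K)`. -/
theorem stmt_12 (L : ℝ) (hL : 0 < L) (K : ℕ) (hK : 1 ≤ K) :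
    ∫ t in (0 : ℝ)..L,
        (Finset.Icc 1 K).inf' (Finset.nonempty_Icc.mpr hK)
          (fun k => |t - (2 * (k : ℝ) - 1) * L / (2 * K)|) =
      L ^ 2 / (4 * K) := by
  have hK0 : (0:ℝ) < K := by exact_mod_cast hK
  set d : ℝ := L / (2 * K) with hd
  have hd0 : 0 < d := by positivity
  have hx : ∀ k : ℕ, (2 * (k : ℝ) - 1) * L / (2 * K) = (2 * k - 1) * d := by
    intro k; rw [hd]; field_simp
  set f : ℝ → ℝ := fun t =>
    (Finset.Icc 1 K).inf' (Finset.nonempty_Icc.mpr hK)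
      (fun k => |t - (2 * (k : ℝ) - 1) * L / (2 * K)|) with hf
  have hcont : Continuous f := by
    apply Continuous.finset_inf'_apply
    intro i _
    exact (continuous_id.sub continuous_const).abs
  -- the function equals |t - (2j+1)d| on [2jd, (2j+2)d]
  have hmin : ∀ j : ℕ, j < K → ∀ t : ℝ, 2 * j * d ≤ t → t ≤ (2 * j + 2) * d →
      f t = |t - (2 * j + 1) * d| := by
    intro j hj t ht1 ht2
    have hmem : j + 1 ∈ Finset.Icc 1 K := by
      simp [Nat.succ_le_of_lt hj]
    have hle : |t - (2 * (j:ℝ) + 1) * d| ≤ d := by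
      rw [abs_le]; constructor <;> nlinarith
    apply le_antisymm
    · have := Finset.inf'_le (b := j + 1)
        (f := fun k : ℕ => |t - (2 * (k : ℝ) - 1) * L / (2 * K)|) hmem
      refine le_trans this (le_of_eq ?_)
      rw [hx]; push_cast; ring_nf
    · apply Finset.le_inf'
      intro k hk
      simp only [Finset.mem_Icc] at hk
      rw [hx]
      rcases eq_or_ne k (j + 1) with rfl | hne
      · push_cast
        apply le_of_eq
        ring_nf
      · have hdk : d ≤ |t - (2 * (k:ℝ) - 1) * d| := by
          rcases lt_or_ge k (j + 1) with h | h
          · have hkj : (k:ℝ) ≤ j := by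
              exact_mod_cast Nat.le_of_lt_succ h
            refine le_trans ?_ (le_abs_self _)
            nlinarith
          · have hkj : (j:ℝ) + 2 ≤ k := by
              exact_mod_cast Nat.succ_le_of_lt (lt_of_le_of_ne h (Ne.symm hne))
            calc d ≤ (2 * (k:ℝ) - 1) * d - t := by nlinarith
              _ ≤ |t - (2 * (k:ℝ) - 1) * d| := by
                  rw [abs_sub_comm]; exact le_abs_self _
        exact le_trans hle hdk
  -- decompose the integral over adjacent intervals
  set a : ℕ → ℝ := fun i => 2 * i * d with ha
  have haL : a K = L := by
    simp only [ha, hd]; field_simp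
  have ha0 : a 0 = 0 := by simp [ha]
  have hsum : ∑ i ∈ Finset.range K, ∫ t in (a i)..(a (i+1)), f t
      = ∫ t in (a 0)..(a K), f t :=
    intervalIntegral.sum_integral_adjacent_intervals
      (fun i _ => hcont.intervalIntegrable _ _)
  have hpiece : ∀ i : ℕ, i < K →
      (∫ t in (a i)..(a (i+1)), f t) = d ^ 2 := by
    intro i hi
    have hab : a i ≤ a (i+1) := by
      simp only [ha]; push_cast; nlinarith
    have hcongr : (∫ t in (a i)..(a (i+1)), f t)
        = ∫ t in (a i)..(a (i+1)), |t - (2 * (i:ℝ) + 1) * d| := by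
      apply intervalIntegral.integral_congr
      intro t ht
      rw [Set.uIcc_of_le hab] at ht
      exact hmin i hi t (by simpa [ha] using ht.1)
        (by have := ht.2; simp only [ha] at this; push_cast at this ⊢; linarith)
    rw [hcongr]
    have hshift : (∫ t in (a i)..(a (i+1)), |t - (2 * (i:ℝ) + 1) * d|)
        = ∫ t in (-d)..d, |t| := by
      rw [intervalIntegral.integral_comp_sub_right (fun t => |t|) ((2 * (i:ℝ) + 1) * d)]
      congr 1 <;> (simp only [ha]; push_cast; ring)
    rw [hshift]
    have h1 : (∫ t in (0:ℝ)..d, |t|) = d ^ 2 / 2 := by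
      rw [intervalIntegral.integral_congr (g := fun t => t)]
      · rw [integral_id]; ring
      · intro t ht
        rw [Set.uIcc_of_le hd0.le] at ht
        exact abs_of_nonneg ht.1
    have h2 : (∫ t in (-d)..(0:ℝ), |t|) = d ^ 2 / 2 := by
      have := intervalIntegral.integral_comp_neg (a := (0:ℝ)) (b := d) (fun t => |t|)
      simp only [abs_neg, neg_zero] at this
      rw [← this]
      exact h1
    rw [← intervalIntegral.integral_add_adjacent_intervals
      ((continuous_abs).intervalIntegrable (-d) 0)
      ((continuous_abs).intervalIntegrable 0 d), h1, h2]
    ring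
  have : ∑ i ∈ Finset.range K, ∫ t in (a i)..(a (i+1)), f t
      = ∑ i ∈ Finset.range K, d ^ 2 := by
    exact Finset.sum_congr rfl (fun i hi => hpiece i (Finset.mem_range.mp hi))
  rw [ha0, haL] at hsum
  rw [← hsum, this, Finset.sum_const, Finset.card_range, nsmul_eq_mul, hd]
  field_simp
  ring
end
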